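/- arXiv:1806.11426 — 6 statements merged into one kernel-verified Lean document; each statement's English description precedes it below -/
import Mathlib

section
/- Let q ∈ (p_c,1]. There exist constants C_1(q), C_2(q) such that for all ε > 0 and x ∈ Z^d, P( sup{ d_{ω_q}([x]_q,[y]_q) : y ∈ Z^d, ‖x−y‖_1 < ε‖x‖_1 } ≥ 3 C_AP ε ‖x‖_1 ) ≤ C_1 e^{−C_2 ε ‖x‖_1}. Consequently, for any ε > 0, with probability one, sup{ d_{ω_q}([x]_q,[y]_q) : ‖x−y‖_1 ≤ ε‖x‖_1 } < 3 C_AP ε ‖x‖_1 for all x with ‖x‖_1 large enough. -/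
open MeasureTheory Filter Real

open scoped ENNReal

namespace PercMaximal

/-- Vertices of the `d`-dimensional cubic lattice. -/
abbrev V (d : ℕ) := Fin d → ℤ

/-- The ℓ¹-norm of a lattice point. -/
noncomputable def norm1 {d : ℕ} (x : V d) : ℝ := ∑ i, |(x i : ℝ)|

/-! If every lattice point of the ℓ¹-ball `B(x, r)` has a cluster point within `r / 2`, then
`[x]` lies in `B(x, r / 2)` and `[y]` lies in `B(x, 3r / 2)` for every `y ∈ B(x, r)`, so
`‖[x] - [y]‖₁ ≤ 2r`. Hence the supremum can reach `3 C_AP r` only if some point of `B(x, r)` is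
far from the cluster, or some pair `u ∈ B(x, r / 2)`, `v ∈ B(x, 3r / 2)` has finite chemical
distance at least `2 C_AP r ≥ C_AP ‖u - v‖₁`. A union bound over these polynomially many points
and pairs gives `C e^{-c r}`. With `r = ε‖x‖₁` these bounds are summable over `x ∈ ℤ^d`, and
Borel–Cantelli gives the almost sure statement. -/

section Norm1

variable {d : ℕ}

theorem norm1_nonneg (x : V d) : 0 ≤ norm1 x :=
  Finset.sum_nonneg fun _ _ => abs_nonneg _

theorem norm1_sub_comm (x y : V d) : norm1 (x - y) = norm1 (y - x) := by
  simp only [norm1, Pi.sub_apply, Int.cast_sub, abs_sub_comm]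

theorem norm1_sub_le_norm1_sub_add_norm1_sub (x y z : V d) :
    norm1 (x - z) ≤ norm1 (x - y) + norm1 (y - z) := by
  simp only [norm1, Pi.sub_apply, Int.cast_sub, ← Finset.sum_add_distrib]
  exact Finset.sum_le_sum fun i _ => abs_sub_le _ _ _

theorem abs_apply_le_norm1 (x : V d) (i : Fin d) : |(x i : ℝ)| ≤ norm1 x :=
  Finset.single_le_sum (fun j _ => abs_nonneg (x j : ℝ)) (Finset.mem_univ i)

theorem exp_neg_mul_norm1 (c : ℝ) (x : V d) :
    exp (-c * norm1 x) = ∏ i, exp (-c * |(x i : ℝ)|) := by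
  rw [norm1, Finset.mul_sum, exp_sum]

noncomputable def ball1 (x : V d) (ρ : ℝ) : Finset (V d) :=
  {y ∈ Finset.Icc (x - fun _ => ⌈ρ⌉) (x + fun _ => ⌈ρ⌉) | norm1 (x - y) ≤ ρ}

theorem mem_ball1 {x y : V d} {ρ : ℝ} : y ∈ ball1 x ρ ↔ norm1 (x - y) ≤ ρ := by
  refine ⟨fun h => (Finset.mem_filter.mp h).2, fun h => Finset.mem_filter.mpr ⟨?_, h⟩⟩
  have hcoord (i : Fin d) : |x i - y i| ≤ ⌈ρ⌉ := by
    have : |((x - y) i : ℝ)| ≤ ρ := (abs_apply_le_norm1 _ i).trans h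
    exact_mod_cast this.trans (Int.le_ceil ρ)
  simp only [Finset.mem_Icc, Pi.le_def, Pi.sub_apply, Pi.add_apply]
  exact ⟨fun i => by linarith [(abs_le.mp (hcoord i)).2],
    fun i => by linarith [(abs_le.mp (hcoord i)).1]⟩

theorem card_ball1_le (x : V d) {ρ : ℝ} (hρ : 0 ≤ ρ) :
    ((ball1 x ρ).card : ℝ) ≤ (2 * ρ + 3) ^ d := by
  have hceil : (0 : ℤ) ≤ 2 * ⌈ρ⌉ + 1 := by linarith [Int.ceil_nonneg hρ]
  have hbox : (Finset.Icc (x - fun _ => ⌈ρ⌉) (x + fun _ => ⌈ρ⌉)).card =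
      (2 * ⌈ρ⌉ + 1).toNat ^ d := by
    rw [Pi.card_Icc, Finset.prod_eq_pow_card fun i _ => ?_, Finset.card_univ, Fintype.card_fin]
    rw [Int.card_Icc, Pi.add_apply, Pi.sub_apply]
    ring_nf
  calc ((ball1 x ρ).card : ℝ) ≤ ((2 * ⌈ρ⌉ + 1).toNat ^ d : ℕ) := by
        exact_mod_cast hbox ▸ Finset.card_filter_le _ _
    _ = (2 * ⌈ρ⌉ + 1 : ℝ) ^ d := by
        rw [Nat.cast_pow, ← Int.cast_natCast, Int.toNat_of_nonneg hceil]
        push_cast; rfl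
    _ ≤ (2 * ρ + 3) ^ d :=
        pow_le_pow_left₀ (by exact_mod_cast hceil) (by linarith [Int.ceil_lt_add_one ρ]) d

end Norm1

theorem pow_le_factorial_div_pow_mul_exp (m : ℕ) {c t : ℝ} (hc : 0 < c) (ht : 0 ≤ t) :
    t ^ m ≤ m.factorial / c ^ m * exp (c * t) := by
  have h := Real.pow_div_factorial_le_exp (x := c * t) (mul_nonneg hc.le ht) m
  rw [mul_pow, div_le_iff₀ (by positivity)] at h
  rw [div_mul_eq_mul_div, le_div_iff₀ (by positivity)]
  linarith

theorem summable_exp_neg_mul_abs_int {c : ℝ} (hc : 0 < c) :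
    Summable fun k : ℤ => exp (-c * |(k : ℝ)|) := by
  have h : Summable fun n : ℕ => exp (n * -c) :=
    Real.summable_exp_nat_mul_iff.mpr (neg_lt_zero.mpr hc)
  refine .of_nat_of_neg (h.congr fun n => ?_) (h.congr fun n => ?_) <;> simp [mul_comm]

theorem tsum_pi_prod_le {ι β : Type*} [Fintype ι] (g : β → ℝ≥0∞) :
    ∑' x : ι → β, ∏ i, g (x i) ≤ (∑' b, g b) ^ Fintype.card ι := by
  classical
  refine ENNReal.summable.tsum_le_of_sum_le fun s => ?_
  calc ∑ x ∈ s, ∏ i, g (x i)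
      ≤ ∑ x ∈ Fintype.piFinset fun i => s.image (· i), ∏ i, g (x i) :=
        Finset.sum_le_sum_of_subset fun x hx =>
          Fintype.mem_piFinset.mpr fun i => Finset.mem_image_of_mem _ hx
    _ = ∏ i, ∑ b ∈ s.image (· i), g b := (Finset.prod_univ_sum _ _).symm
    _ ≤ ∏ _i : ι, ∑' b, g b := by gcongr; exact ENNReal.sum_le_tsum _
    _ = (∑' b, g b) ^ Fintype.card ι := by rw [Finset.prod_const, Finset.card_univ]

theorem tsum_ofReal_exp_neg_mul_norm1_ne_top {d : ℕ} {c : ℝ} (hc : 0 < c) :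
    ∑' x : V d, ENNReal.ofReal (exp (-c * norm1 x)) ≠ ⊤ := by
  have hint : ∑' k : ℤ, ENNReal.ofReal (exp (-c * |(k : ℝ)|)) ≠ ⊤ := by
    rw [← ENNReal.ofReal_tsum_of_nonneg (fun _ => (exp_pos _).le)
      (summable_exp_neg_mul_abs_int hc)]
    exact ENNReal.ofReal_ne_top
  refine ne_top_of_le_ne_top (ENNReal.pow_ne_top (n := d) hint) ?_
  simpa only [exp_neg_mul_norm1, ENNReal.ofReal_prod_of_nonneg fun i _ => (exp_pos _).le,
    Fintype.card_fin] using
    tsum_pi_prod_le (ι := Fin d) fun k : ℤ => ENNReal.ofReal (exp (-c * |(k : ℝ)|))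

theorem ae_exists_forall_notMem_of_measure_le_exp {d : ℕ} {Ω : Type*} [MeasurableSpace Ω]
    {μ : Measure Ω} {E : V d → Set Ω} {C c : ℝ} (hc : 0 < c)
    (hE : ∀ x, μ (E x) ≤ ENNReal.ofReal (C * exp (-c * norm1 x))) :
    ∀ᵐ ω ∂μ, ∃ R : ℝ, ∀ x, R ≤ norm1 x → ω ∉ E x := by
  have hsum : ∑' x, μ (E x) ≠ ⊤ := by
    refine ne_top_of_le_ne_top (ENNReal.mul_ne_top (ENNReal.ofReal_ne_top (r := C))
      (tsum_ofReal_exp_neg_mul_norm1_ne_top (d := d) hc)) ?_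
    rw [← ENNReal.tsum_mul_left]
    exact ENNReal.tsum_le_tsum fun x => (hE x).trans_eq (ENNReal.ofReal_mul' (exp_pos _).le)
  filter_upwards [ae_finite_setOfPred_mem hsum] with ω hω
  obtain ⟨R, hR⟩ := (hω.image norm1).bddAbove
  exact ⟨R + 1, fun x hx hmem => by linarith [hR ⟨x, hmem, rfl⟩]⟩

section ClosestPoint

variable {d : ℕ}

def IsClosestPointMap (C : Set (V d)) (cl : V d → V d) : Prop :=
  ∀ z, cl z ∈ C ∧ ∀ y ∈ C, norm1 (z - cl z) ≤ norm1 (z - y)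

variable {C : Set (V d)} {cl : V d → V d}

theorem IsClosestPointMap.norm1_sub_le (h : IsClosestPointMap C cl) {y w : V d} (hw : w ∈ C)
    {s : ℝ} (hs : norm1 (w - y) ≤ s) : norm1 (y - cl y) ≤ s :=
  ((h y).2 w hw).trans ((norm1_sub_comm y w).trans_le hs)

theorem IsClosestPointMap.iSup_le (h : IsClosestPointMap C cl) {ρ : V d → V d → ℝ≥0∞}
    (hfin : ∀ u ∈ C, ∀ v ∈ C, ρ u v ≠ ⊤) {x : V d} {r : ℝ} {t : ℝ≥0∞}
    (hnear : ∀ y ∈ ball1 x r, ∃ w ∈ C, norm1 (w - y) ≤ r / 2)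
    (hshort : ∀ u ∈ ball1 x (r / 2), ∀ v ∈ ball1 x (3 * r / 2), ρ u v ≠ ⊤ → ρ u v < t) :
    ⨆ (y : V d) (_ : norm1 (x - y) ≤ r), ρ (cl x) (cl y) ≤ t := by
  refine iSup₂_le fun y hy => ?_
  have hcl_near {z : V d} (hz : norm1 (x - z) ≤ r) : norm1 (z - cl z) ≤ r / 2 := by
    obtain ⟨w, hw, hwz⟩ := hnear z (mem_ball1.2 hz)
    exact h.norm1_sub_le hw hwz
  have hx : norm1 (x - cl x) ≤ r / 2 :=
    hcl_near (by simpa [norm1] using (norm1_nonneg _).trans hy)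
  have hy' : norm1 (x - cl y) ≤ 3 * r / 2 := by
    linarith [norm1_sub_le_norm1_sub_add_norm1_sub x y (cl y), hcl_near hy]
  exact (hshort _ (mem_ball1.2 hx) _ (mem_ball1.2 hy') (hfin _ (h x).1 _ (h y).1)).le

end ClosestPoint

section Percolation

variable {d : ℕ} {Ω : Type*} [MeasurableSpace Ω] {μ : Measure Ω}
  {chem : Ω → V d → V d → ℝ≥0∞} {Cinf : Ω → Set (V d)} {cl : Ω → V d → V d}

theorem measure_lt_iSup_chem_cl_le_sum (hcl : ∀ᵐ ω ∂μ, IsClosestPointMap (Cinf ω) (cl ω))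
    (hconn : ∀ᵐ ω ∂μ, ∀ y ∈ Cinf ω, ∀ z ∈ Cinf ω, chem ω y z ≠ ⊤) (x : V d) (r : ℝ)
    (t : ℝ≥0∞) :
    μ {ω | t < ⨆ (y : V d) (_ : norm1 (x - y) ≤ r), chem ω (cl ω x) (cl ω y)} ≤
      ∑ y ∈ ball1 x r, μ {ω | ∀ w ∈ Cinf ω, ¬ norm1 (w - y) ≤ r / 2} +
      ∑ u ∈ ball1 x (r / 2), ∑ v ∈ ball1 x (3 * r / 2),
        μ {ω | t ≤ chem ω u v ∧ chem ω u v ≠ ⊤} := by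
  calc _ ≤ μ ((⋃ y ∈ ball1 x r, {ω | ∀ w ∈ Cinf ω, ¬ norm1 (w - y) ≤ r / 2}) ∪
        ⋃ u ∈ ball1 x (r / 2), ⋃ v ∈ ball1 x (3 * r / 2),
          {ω | t ≤ chem ω u v ∧ chem ω u v ≠ ⊤}) := by
        refine measure_mono_ae <| ae_le_set.2 <| measure_mono_null ?_ (ae_iff.1 (hcl.and hconn))
        rintro ω ⟨hbad, hgood⟩ ⟨hω, hfin⟩
        simp only [Set.mem_union, Set.mem_iUnion, Set.mem_ofPred_eq, exists_prop, not_or,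
          not_exists, not_and, not_forall, not_not] at hgood
        exact hbad.not_ge (hω.iSup_le hfin hgood.1 fun u hu v hv hne =>
          not_le.1 fun hle => hne (hgood.2 u hu v hv hle))
    _ ≤ _ := (measure_union_le _ _).trans (add_le_add (measure_biUnion_finset_le _ _)
        ((measure_biUnion_finset_le _ _).trans
          (Finset.sum_le_sum fun _ _ => measure_biUnion_finset_le _ _)))

variable {CAP C1 C2 : ℝ}

theorem measure_lt_iSup_chem_cl_le_exp (hcl : ∀ᵐ ω ∂μ, IsClosestPointMap (Cinf ω) (cl ω))
    (hconn : ∀ᵐ ω ∂μ, ∀ y ∈ Cinf ω, ∀ z ∈ Cinf ω, chem ω y z ≠ ⊤)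
    (hCAP : 1 ≤ CAP) (hC1 : 0 ≤ C1) (hC2 : 0 ≤ C2)
    (hi : ∀ y z : V d, ∀ t : ℝ, CAP * norm1 (y - z) ≤ t →
        μ {ω | ENNReal.ofReal t ≤ chem ω y z ∧ chem ω y z ≠ ⊤}
          ≤ ENNReal.ofReal (C1 * exp (-C2 * t)))
    (hii : ∀ x : V d, ∀ t : ℝ, 0 ≤ t →
        μ {ω | ∀ y ∈ Cinf ω, ¬ norm1 (y - x) ≤ t}
          ≤ ENNReal.ofReal (C1 * exp (-C2 * t)))
    (x : V d) {r : ℝ} (hr : 0 ≤ r) :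
    μ {ω | ENNReal.ofReal (2 * CAP * r) <
        ⨆ (y : V d) (_ : norm1 (x - y) ≤ r), chem ω (cl ω x) (cl ω y)} ≤
      ENNReal.ofReal (2 * (3 * r + 3) ^ (2 * d) * (C1 * exp (-(C2 / 2) * r))) := by
  set c := C1 * exp (-(C2 / 2) * r)
  have hA (y : V d) : μ {ω | ∀ w ∈ Cinf ω, ¬ norm1 (w - y) ≤ r / 2} ≤ ENNReal.ofReal c :=
    (hii y (r / 2) (by positivity)).trans_eq (by rw [show -C2 * (r / 2) = -(C2 / 2) * r by ring])
  have hD (u v : V d) (hu : u ∈ ball1 x (r / 2)) (hv : v ∈ ball1 x (3 * r / 2)) :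
      μ {ω | ENNReal.ofReal (2 * CAP * r) ≤ chem ω u v ∧ chem ω u v ≠ ⊤} ≤
        ENNReal.ofReal c := by
    have huv : norm1 (u - v) ≤ 2 * r := by
      linarith [norm1_sub_le_norm1_sub_add_norm1_sub u x v, norm1_sub_comm u x,
        mem_ball1.1 hu, mem_ball1.1 hv]
    refine (hi u v _ (by nlinarith)).trans (ENNReal.ofReal_le_ofReal ?_)
    refine mul_le_mul_of_nonneg_left (exp_le_exp.2 ?_) hC1
    nlinarith [mul_nonneg (mul_nonneg hC2 hr) (by linarith : (0 : ℝ) ≤ 2 * CAP - 1 / 2)]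
  have hcard {ρ : ℝ} (h0 : 0 ≤ ρ) (h1 : ρ ≤ 3 * r / 2) :
      ((ball1 x ρ).card : ℝ) ≤ (3 * r + 3) ^ d :=
    (card_ball1_le x h0).trans (pow_le_pow_left₀ (by linarith) (by linarith) d)
  have hP : 1 ≤ (3 * r + 3) ^ d := one_le_pow₀ (by linarith)
  have hc : 0 ≤ c := by positivity
  clear_value c
  calc _ ≤ _ := measure_lt_iSup_chem_cl_le_sum hcl hconn x r _
    _ ≤ ∑ y ∈ ball1 x r, ENNReal.ofReal c +
          ∑ u ∈ ball1 x (r / 2), ∑ v ∈ ball1 x (3 * r / 2), ENNReal.ofReal c :=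
        add_le_add (Finset.sum_le_sum fun y _ => hA y)
          (Finset.sum_le_sum fun u hu => Finset.sum_le_sum fun v hv => hD u v hu hv)
    _ = ENNReal.ofReal (((ball1 x r).card + (ball1 x (r / 2)).card * (ball1 x (3 * r / 2)).card)
          * c) := by
        simp only [Finset.sum_const, nsmul_eq_mul]
        rw [ENNReal.ofReal_mul (by positivity), ENNReal.ofReal_add (by positivity) (by positivity),
          ENNReal.ofReal_mul (by positivity)]
        simp only [ENNReal.ofReal_natCast]
        ring
    _ ≤ _ := by
        refine ENNReal.ofReal_le_ofReal (mul_le_mul_of_nonneg_right ?_ (by positivity))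
        have hS := hcard hr (by linarith : r ≤ 3 * r / 2)
        have hUB := mul_le_mul (hcard (by positivity) (by linarith : r / 2 ≤ 3 * r / 2))
          (hcard (by positivity) le_rfl) (by positivity) (by positivity)
        rw [pow_mul', two_mul]
        nlinarith

theorem exists_measure_le_iSup_chem_cl_le_exp [IsProbabilityMeasure μ]
    (hcl : ∀ᵐ ω ∂μ, IsClosestPointMap (Cinf ω) (cl ω))
    (hconn : ∀ᵐ ω ∂μ, ∀ y ∈ Cinf ω, ∀ z ∈ Cinf ω, chem ω y z ≠ ⊤)
    (hCAP : 1 ≤ CAP) (hC1 : 0 ≤ C1) (hC2 : 0 < C2)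
    (hi : ∀ y z : V d, ∀ t : ℝ, CAP * norm1 (y - z) ≤ t →
        μ {ω | ENNReal.ofReal t ≤ chem ω y z ∧ chem ω y z ≠ ⊤}
          ≤ ENNReal.ofReal (C1 * exp (-C2 * t)))
    (hii : ∀ x : V d, ∀ t : ℝ, 0 ≤ t →
        μ {ω | ∀ y ∈ Cinf ω, ¬ norm1 (y - x) ≤ t}
          ≤ ENNReal.ofReal (C1 * exp (-C2 * t))) :
    ∃ C3 C4 : ℝ, 0 < C3 ∧ 0 < C4 ∧ ∀ x : V d, ∀ r : ℝ, 0 ≤ r →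
      μ {ω | ENNReal.ofReal (3 * CAP * r) ≤
          ⨆ (y : V d) (_ : norm1 (x - y) ≤ r), chem ω (cl ω x) (cl ω y)} ≤
        ENNReal.ofReal (C3 * exp (-C4 * r)) := by
  set K := (2 * d).factorial / (C2 / 12) ^ (2 * d) * exp (C2 / 4)
  have hpoly (r : ℝ) (hr : 0 ≤ r) : (3 * r + 3) ^ (2 * d) ≤ K * exp (C2 / 4 * r) := by
    refine (pow_le_factorial_div_pow_mul_exp (2 * d) (c := C2 / 12) (by positivity)
      (by positivity)).trans_eq ?_
    rw [mul_assoc, ← exp_add]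
    ring_nf
  refine ⟨max (2 * K * C1) 1, C2 / 4, by positivity, by positivity, fun x r hr => ?_⟩
  rcases hr.eq_or_lt with rfl | hr
  -- at `r = 0` the event is all of `Ω`, whence the `max _ 1`
  · exact prob_le_one.trans (by simp)
  calc _ ≤ μ {ω | ENNReal.ofReal (2 * CAP * r) <
        ⨆ (y : V d) (_ : norm1 (x - y) ≤ r), chem ω (cl ω x) (cl ω y)} :=
        measure_mono fun ω hω =>
          ((ENNReal.ofReal_lt_ofReal_iff (by positivity)).2 (by nlinarith)).trans_le hω
    _ ≤ _ := measure_lt_iSup_chem_cl_le_exp hcl hconn hCAP hC1 hC2.le hi hii x hr.le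
    _ ≤ ENNReal.ofReal (2 * K * C1 * exp (-(C2 / 4) * r)) := by
        refine ENNReal.ofReal_le_ofReal ?_
        calc _ ≤ 2 * (K * exp (C2 / 4 * r)) * (C1 * exp (-(C2 / 2) * r)) := by
              gcongr; exact hpoly r hr.le
          _ = 2 * K * C1 * exp (-(C2 / 4) * r) := by
              rw [show 2 * (K * exp (C2 / 4 * r)) * (C1 * exp (-(C2 / 2) * r)) =
                2 * K * C1 * (exp (C2 / 4 * r) * exp (-(C2 / 2) * r)) by ring, ← exp_add]
              ring_nf
    _ ≤ _ := ENNReal.ofReal_le_ofReal (by gcongr; exact le_max_left _ _)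

end Percolation

theorem chemical_distance_maximal_estimate_general
    {d : ℕ}
    {Ω : Type*} [MeasurableSpace Ω] (μ : Measure Ω) [IsProbabilityMeasure μ]
    (chem : Ω → V d → V d → ℝ≥0∞)      -- the chemical distance `d_{ω_q}`
    (Cinf : Ω → Set (V d))             -- the infinite cluster `C_∞(ω_q)`
    (cl : Ω → V d → V d)               -- the closest point map `[·]_q`
    (hcl : ∀ᵐ ω ∂μ, ∀ z : V d, cl ω z ∈ Cinf ω ∧
        ∀ y ∈ Cinf ω, norm1 (z - cl ω z) ≤ norm1 (z - y))
    (hconn : ∀ᵐ ω ∂μ, ∀ y ∈ Cinf ω, ∀ z ∈ Cinf ω, chem ω y z ≠ ⊤)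
    (CAP C1 C2 : ℝ) (hCAP : 1 ≤ CAP) (hC1 : 0 < C1) (hC2 : 0 < C2)
    -- estimate (i): `P(t ≤ d_{ω_q}(y,z) < ∞) ≤ C₁ e^{-C₂ t}` for `t ≥ C_AP ‖y-z‖₁`
    (hi : ∀ y z : V d, ∀ t : ℝ, CAP * norm1 (y - z) ≤ t →
        μ {ω | ENNReal.ofReal t ≤ chem ω y z ∧ chem ω y z ≠ ⊤}
          ≤ ENNReal.ofReal (C1 * Real.exp (-C2 * t)))
    -- estimate (ii): `P(C_∞ ∩ B₁(x,t) = ∅) ≤ C₁ e^{-C₂ t}` for `t ≥ 0`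
    (hii : ∀ x : V d, ∀ t : ℝ, 0 ≤ t →
        μ {ω | ∀ y ∈ Cinf ω, ¬ norm1 (y - x) ≤ t}
          ≤ ENNReal.ofReal (C1 * Real.exp (-C2 * t))) :
    (∃ C3 C4 : ℝ, 0 < C3 ∧ 0 < C4 ∧ ∀ ε : ℝ, 0 < ε → ∀ x : V d,
      μ {ω | ENNReal.ofReal (3 * CAP * ε * norm1 x) ≤
          ⨆ (y : V d) (_ : norm1 (x - y) < ε * norm1 x), chem ω (cl ω x) (cl ω y)}
        ≤ ENNReal.ofReal (C3 * Real.exp (-C4 * ε * norm1 x))) ∧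
    ∀ ε : ℝ, 0 < ε → ∀ᵐ ω ∂μ, ∃ R : ℝ, ∀ x : V d, R ≤ norm1 x →
      (⨆ (y : V d) (_ : norm1 (x - y) ≤ ε * norm1 x), chem ω (cl ω x) (cl ω y))
        < ENNReal.ofReal (3 * CAP * ε * norm1 x) := by
  obtain ⟨C3, C4, hC3, hC4, hbound⟩ :=
    exists_measure_le_iSup_chem_cl_le_exp hcl hconn hCAP hC1.le hC2 hi hii
  have hscaled (ε : ℝ) (hε : 0 < ε) (x : V d) :
      μ {ω | ENNReal.ofReal (3 * CAP * ε * norm1 x) ≤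
          ⨆ (y : V d) (_ : norm1 (x - y) ≤ ε * norm1 x), chem ω (cl ω x) (cl ω y)}
        ≤ ENNReal.ofReal (C3 * exp (-C4 * ε * norm1 x)) := by
    simpa only [mul_assoc] using hbound x (ε * norm1 x) (mul_nonneg hε.le (norm1_nonneg x))
  refine ⟨⟨C3, C4, hC3, hC4, fun ε hε x => ?_⟩, fun ε hε => ?_⟩
  · refine (measure_mono (Set.ofPred_subset_ofPred.2 fun ω hω => ?_)).trans (hscaled ε hε x)
    exact hω.trans (biSup_mono fun y hy => hy.le)
  · have hE := ae_exists_forall_notMem_of_measure_le_exp (mul_pos hC4 hε)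
      (by simpa only [neg_mul] using hscaled ε hε)
    filter_upwards [hE] with ω ⟨R, hR⟩
    exact ⟨R, fun x hx => not_le.1 (hR x hx)⟩

/-- Maximal estimate for chemical distances between closest
points in the infinite cluster: there are constants `C₁(q), C₂(q)` such that
for all `ε > 0` and `x ∈ ℤ^d`,
`P( sup{ d_{ω_q}([x]_q,[y]_q) : ‖x-y‖₁ < ε‖x‖₁ } ≥ 3 C_AP ε ‖x‖₁ ) ≤ C₁ e^{-C₂ ε ‖x‖₁}`;
consequently, for every `ε > 0`, almost surely the supremum is `< 3 C_AP ε ‖x‖₁`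
for all `x` with `‖x‖₁` large enough. -/
theorem chemical_distance_maximal_estimate
    {d : ℕ} (hd : 2 ≤ d)
    {Ω : Type*} [MeasurableSpace Ω] (μ : Measure Ω) [IsProbabilityMeasure μ]
    (chem : Ω → V d → V d → ℝ≥0∞)      -- the chemical distance `d_{ω_q}`
    (Cinf : Ω → Set (V d))             -- the infinite cluster `C_∞(ω_q)`
    (cl : Ω → V d → V d)               -- the closest point map `[·]_q`
    (hcl : ∀ᵐ ω ∂μ, ∀ z : V d, cl ω z ∈ Cinf ω ∧
        ∀ y ∈ Cinf ω, norm1 (z - cl ω z) ≤ norm1 (z - y))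
    (hzero : ∀ ω, ∀ z : V d, chem ω z z = 0)
    (hconn : ∀ᵐ ω ∂μ, ∀ y ∈ Cinf ω, ∀ z ∈ Cinf ω, chem ω y z ≠ ⊤)
    (CAP C1 C2 : ℝ) (hCAP : 1 ≤ CAP) (hC1 : 0 < C1) (hC2 : 0 < C2)
    -- estimate (i): `P(t ≤ d_{ω_q}(y,z) < ∞) ≤ C₁ e^{-C₂ t}` for `t ≥ C_AP ‖y-z‖₁`
    (hi : ∀ y z : V d, ∀ t : ℝ, CAP * norm1 (y - z) ≤ t →
        μ {ω | ENNReal.ofReal t ≤ chem ω y z ∧ chem ω y z ≠ ⊤}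
          ≤ ENNReal.ofReal (C1 * Real.exp (-C2 * t)))
    -- estimate (ii): `P(C_∞ ∩ B₁(x,t) = ∅) ≤ C₁ e^{-C₂ t}` for `t ≥ 0`
    (hii : ∀ x : V d, ∀ t : ℝ, 0 ≤ t →
        μ {ω | ∀ y ∈ Cinf ω, ¬ norm1 (y - x) ≤ t}
          ≤ ENNReal.ofReal (C1 * Real.exp (-C2 * t))) :
    (∃ C3 C4 : ℝ, 0 < C3 ∧ 0 < C4 ∧ ∀ ε : ℝ, 0 < ε → ∀ x : V d,
      μ {ω | ENNReal.ofReal (3 * CAP * ε * norm1 x) ≤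
          ⨆ (y : V d) (_ : norm1 (x - y) < ε * norm1 x), chem ω (cl ω x) (cl ω y)}
        ≤ ENNReal.ofReal (C3 * Real.exp (-C4 * ε * norm1 x))) ∧
    ∀ ε : ℝ, 0 < ε → ∀ᵐ ω ∂μ, ∃ R : ℝ, ∀ x : V d, R ≤ norm1 x →
      (⨆ (y : V d) (_ : norm1 (x - y) ≤ ε * norm1 x), chem ω (cl ω x) (cl ω y))
        < ENNReal.ofReal (3 * CAP * ε * norm1 x) :=
  chemical_distance_maximal_estimate_general μ chem Cinf cl hcl hconn CAP C1 C2 hCAP hC1 hC2 hi hii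

end PercMaximal
end

section
/- Almost surely, the modified travel cost approximates the Lyapunov exponent uniformly in direction: lim_{‖x‖_1→∞} (a_λ^q(0,x,ω_p) − α_λ^p(x))/‖x‖_1 = 0. -/
/-!
The triangle inequality and the maximal chemical-distance estimate make `x ↦ a_λ^q(0,x)` vary
by `o(‖x‖₁)` over `ℓ¹`-distances `o(‖x‖₁)`. A far point `x` lies within `ℓ¹`-distance `d k / 2`
of a point `k z` with `k ≈ ‖x‖₁ / M` and `z` in a box of side `O(M)`. The box is finite, so the
radial limits converge uniformly on it, and for `M` large both `a_λ^q(0,·)` and the norm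
`α_λ^p ≤ α_λ^p(ξ₁) ‖·‖₁` move by at most `ε ‖x‖₁` between `x` and `k z`.
-/

open MeasureTheory Filter Real

namespace PercShape

/-- Vertices of the `d`-dimensional cubic lattice. -/
abbrev V (d : ℕ) := Fin d → ℤ

/-- The ℓ¹-norm of a lattice point. -/
noncomputable def norm1 {d : ℕ} (x : V d) : ℝ := ∑ i, |(x i : ℝ)|

/-- The ℓ¹-norm on `ℝ^d`. -/
noncomputable def norm1R {d : ℕ} (x : Fin d → ℝ) : ℝ := ∑ i, |x i|

/-- The canonical embedding `ℤ^d → ℝ^d`. -/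
def toR {d : ℕ} (x : V d) : Fin d → ℝ := fun i => (x i : ℝ)

/-- The first coordinate vector `ξ₁` of `ℝ^d`. -/
noncomputable def xi1 (d : ℕ) : Fin d → ℝ := fun i => if (i : ℕ) = 0 then 1 else 0

section
variable {d : ℕ}

lemma norm1_nonneg (x : V d) : 0 ≤ norm1 x :=
  Finset.sum_nonneg fun _ _ => abs_nonneg _

lemma abs_apply_le_norm1 (x : V d) (i : Fin d) : |(x i : ℝ)| ≤ norm1 x :=
  Finset.single_le_sum (f := fun j => |(x j : ℝ)|) (fun _ _ => abs_nonneg _) (Finset.mem_univ i)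

lemma norm1_sub_comm (x y : V d) : norm1 (x - y) = norm1 (y - x) := by
  simp only [norm1, Pi.sub_apply, Int.cast_sub, abs_sub_comm]

lemma norm1_le_add_norm1_sub (x y : V d) : norm1 x ≤ norm1 y + norm1 (x - y) := by
  rw [norm1, norm1, norm1, ← Finset.sum_add_distrib]
  refine Finset.sum_le_sum fun i _ => ?_
  have := abs_sub_abs_le_abs_sub (x i : ℝ) (y i)
  push_cast [Pi.sub_apply]
  linarith

lemma norm1R_toR_sub (x y : V d) : norm1R (toR x - toR y) = norm1 (x - y) := by
  simp [norm1R, norm1, toR]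

lemma toR_nsmul (k : ℕ) (z : V d) : toR (k • z) = (k : ℝ) • toR z := by
  ext i
  simp [toR]

lemma exists_norm1_sub_nsmul_le (x : V d) {k : ℕ} (hk : 0 < k) :
    ∃ z : V d, norm1 (x - k • z) ≤ d * k / 2 ∧ ∀ i, |(z i : ℝ)| ≤ norm1 x / k + 1 / 2 := by
  have hk' : (0 : ℝ) < k := by exact_mod_cast hk
  set z : V d := fun i => round ((x i : ℝ) / k)
  have hz : ∀ i, |(x i : ℝ) - k * z i| ≤ k / 2 := fun i => by
    have h := abs_sub_round ((x i : ℝ) / k)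
    calc |(x i : ℝ) - k * z i| = k * |(x i : ℝ) / k - z i| := by
          rw [← abs_of_pos hk', ← abs_mul, abs_of_pos hk', mul_sub, mul_div_cancel₀ _ hk'.ne']
      _ ≤ k * (1 / 2) := by gcongr
      _ = k / 2 := by ring
  refine ⟨z, ?_, fun i => ?_⟩
  · calc norm1 (x - k • z) = ∑ i, |(x i : ℝ) - k * z i| := by simp [norm1]
      _ ≤ ∑ _i : Fin d, (k : ℝ) / 2 := Finset.sum_le_sum fun i _ => hz i
      _ = d * k / 2 := by simp; ring
  · rw [div_add' _ _ _ hk'.ne', le_div_iff₀ hk']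
    have := abs_sub_abs_le_abs_sub (k * (z i : ℝ)) (x i)
    rw [abs_sub_comm, abs_mul, abs_of_pos hk'] at this
    linarith [hz i, abs_apply_le_norm1 x i]

lemma eventually_forall_abs_nsmul_sub_le {f g : V d → ℝ}
    (hrad : ∀ z, Tendsto (fun k : ℕ => (k : ℝ)⁻¹ * f (k • z)) atTop (nhds (g z)))
    (B : ℝ) {η : ℝ} (hη : 0 < η) :
    ∀ᶠ k : ℕ in atTop, ∀ z : V d, (∀ i, |(z i : ℝ)| ≤ B) → |f (k • z) - k * g z| ≤ η * k := by
  have hbox : {z : V d | ∀ i, |(z i : ℝ)| ≤ B}.Finite := by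
    refine (Set.finite_Icc (fun _ => -⌈B⌉) (fun _ => ⌈B⌉)).subset fun z hz => ?_
    have hzB : ∀ i, |z i| ≤ ⌈B⌉ := fun i => by exact_mod_cast (hz i).trans (Int.le_ceil B)
    exact ⟨fun i => neg_le_of_abs_le (hzB i), fun i => le_of_abs_le (hzB i)⟩
  filter_upwards [(eventually_all_finite hbox).2 fun z _ =>
    (hrad z).eventually (Metric.ball_mem_nhds _ hη), eventually_gt_atTop 0] with k hk hk0 z hz
  have hk' : (0 : ℝ) < k := by exact_mod_cast hk0
  have h := (Real.dist_eq _ _ ▸ hk z hz).le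
  calc |f (k • z) - k * g z| = k * |(k : ℝ)⁻¹ * f (k • z) - g z| := by
        rw [← abs_of_pos hk', ← abs_mul, abs_of_pos hk', mul_sub, mul_inv_cancel_left₀ hk'.ne']
    _ ≤ η * k := by rw [mul_comm η]; gcongr

def LargeScaleContinuous (f : V d → ℝ) : Prop :=
  ∀ η > 0, ∃ δ > 0, ∃ R, ∀ x y, R ≤ norm1 x → norm1 (x - y) ≤ δ * norm1 x →
    |f x - f y| ≤ η * norm1 x

theorem exists_abs_sub_le_of_radial_limit {f : V d → ℝ} {p : Seminorm ℝ (Fin d → ℝ)} {A : ℝ}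
    (hA : 0 ≤ A) (hpA : ∀ u, p u ≤ A * norm1R u)
    (hrad : ∀ z, Tendsto (fun k : ℕ => (k : ℝ)⁻¹ * f (k • z)) atTop (nhds (p (toR z))))
    (hf : LargeScaleContinuous f) {ε : ℝ} (hε : 0 < ε) :
    ∃ R, ∀ x, R ≤ norm1 x → |f x - p (toR x)| ≤ ε * norm1 x := by
  set η := ε / 3 with hη_def
  have hη : 0 < η := by positivity
  obtain ⟨δ, hδ, R₀, hR₀⟩ := hf η hη
  obtain ⟨M, hM⟩ := exists_nat_gt (d / (2 * δ) + A * d / (2 * η))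
  have hM0 : (0 : ℝ) < M := lt_of_le_of_lt (by positivity) hM
  have hMδ : d ≤ 2 * δ * M := by
    have : d / (2 * δ) ≤ M := by linarith [show 0 ≤ A * d / (2 * η) by positivity]
    rwa [div_le_iff₀ (by positivity), mul_comm] at this
  have hMA : A * d ≤ 2 * η * M := by
    have : A * d / (2 * η) ≤ M := by linarith [show 0 ≤ d / (2 * δ) by positivity]
    rw [div_le_iff₀ (by positivity)] at this
    linarith
  obtain ⟨K, hK⟩ := eventually_atTop.1 (eventually_forall_abs_nsmul_sub_le hrad (2 * M + 1) hη)
  refine ⟨max R₀ (M * (K + 1)), fun x hx => ?_⟩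
  set n := norm1 x
  set k := ⌊n / M⌋₊
  have hkK : K + 1 ≤ k := Nat.le_floor <| by
    rw [le_div_iff₀ hM0]; push_cast; linarith [le_max_right R₀ (M * (K + 1))]
  have hk1 : (1 : ℝ) ≤ k := by exact_mod_cast (show 1 ≤ k by omega)
  have hk0 : (0 : ℝ) < k := by linarith
  have hM1 : (1 : ℝ) ≤ M := by exact_mod_cast (show 0 < M by exact_mod_cast hM0)
  have hkn : k * M ≤ n := (le_div_iff₀ hM0).1 (Nat.floor_le (div_nonneg (norm1_nonneg x) hM0.le))
  have hnk : n < (k + 1) * M := (div_lt_iff₀ hM0).1 (Nat.lt_floor_add_one _)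
  obtain ⟨z, hxz, hz⟩ := exists_norm1_sub_nsmul_le x (show 0 < k by omega)
  have hdk : d * k / 2 ≤ δ * n := by nlinarith
  have hT1 : |f x - f (k • z)| ≤ η * n :=
    hR₀ x (k • z) ((le_max_left _ _).trans hx) (hxz.trans hdk)
  have hT2 : |f (k • z) - k * p (toR z)| ≤ η * n := by
    refine (hK k (by omega) z fun i => (hz i).trans ?_).trans
      (mul_le_mul_of_nonneg_left (by nlinarith) hη.le)
    have : n / k ≤ 2 * M := by rw [div_le_iff₀ hk0]; nlinarith
    linarith
  have hT3 : |k * p (toR z) - p (toR x)| ≤ η * n := by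
    have hpk : p (toR (k • z)) = k * p (toR z) := by
      rw [toR_nsmul, map_smul_eq_mul, Real.norm_natCast]
    calc |k * p (toR z) - p (toR x)| ≤ p (toR (k • z) - toR x) := hpk ▸ abs_sub_map_le_sub p _ _
      _ ≤ A * norm1 (x - k • z) := by rw [← norm1_sub_comm, ← norm1R_toR_sub]; exact hpA _
      _ ≤ A * (d * k / 2) := by gcongr
      _ ≤ η * n := by nlinarith
  have h₁ := abs_sub_le (f x) (f (k • z)) (p (toR x))
  have h₂ := abs_sub_le (f (k • z)) (k * p (toR z)) (p (toR x))
  have h₃ : 3 * (η * n) = ε * n := by rw [hη_def]; ring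
  linarith

/-- Halving `ε` keeps `y` far out, `‖x‖₁ / 2 ≤ ‖y‖₁`, so the bound on `c` also applies to
`c y x`. -/
lemma abs_sub_le_of_cost_le {c : V d → V d → ℝ} (htri : ∀ x y z, c x z ≤ c x y + c y z)
    {B ε R : ℝ} (hB : 0 ≤ B) (hε : 0 < ε) (hε1 : ε ≤ 1)
    (hc : ∀ x y, R ≤ norm1 x → norm1 (x - y) ≤ ε * norm1 x → c x y ≤ B * ε * norm1 x)
    (o x y : V d) (hx : 2 * |R| ≤ norm1 x) (hxy : norm1 (x - y) ≤ ε / 2 * norm1 x) :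
    |c o x - c o y| ≤ 2 * B * ε * norm1 x := by
  have hRx : R ≤ norm1 x := by linarith [le_abs_self R, abs_nonneg R, norm1_nonneg x]
  have hyx : norm1 (y - x) = norm1 (x - y) := norm1_sub_comm y x
  have hy_lb : norm1 x / 2 ≤ norm1 y := by
    nlinarith [norm1_le_add_norm1_sub x y, norm1_nonneg x]
  have hy_ub : norm1 y ≤ 2 * norm1 x := by
    nlinarith [norm1_le_add_norm1_sub y x, norm1_nonneg x]
  have hxy' : c x y ≤ B * ε * norm1 x := hc x y hRx (by nlinarith [norm1_nonneg x])
  have hyx' : c y x ≤ B * ε * norm1 y :=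
    hc y x (by linarith [le_abs_self R]) (by nlinarith [norm1_nonneg x])
  have hBε : 0 ≤ B * ε := by positivity
  rw [abs_sub_le_iff]
  constructor <;> nlinarith [htri o y x, htri o x y, norm1_nonneg x]

lemma largeScaleContinuous_of_cost_le {c : V d → V d → ℝ}
    (htri : ∀ x y z, c x z ≤ c x y + c y z) {B : ℝ} (hB : 0 ≤ B)
    (hc : ∀ m : ℕ, ∃ R, ∀ x y, R ≤ norm1 x → norm1 (x - y) ≤ 1 / ((m : ℝ) + 1) * norm1 x →
      c x y ≤ B * (1 / ((m : ℝ) + 1)) * norm1 x)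
    (o : V d) : LargeScaleContinuous (c o) := by
  intro η hη
  have hlim : Tendsto (fun m : ℕ => 2 * B * (1 / ((m : ℝ) + 1))) atTop (nhds 0) := by
    simpa using tendsto_one_div_add_atTop_nhds_zero_nat.const_mul (2 * B)
  obtain ⟨m, hm⟩ := (hlim.eventually (gt_mem_nhds hη)).exists
  obtain ⟨R, hR⟩ := hc m
  have hε : (0 : ℝ) < 1 / ((m : ℝ) + 1) := Nat.one_div_pos_of_nat
  have hε1 : 1 / ((m : ℝ) + 1) ≤ 1 := by
    rw [div_le_one (by positivity)]; linarith [Nat.cast_nonneg (α := ℝ) m]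
  refine ⟨1 / ((m : ℝ) + 1) / 2, by positivity, 2 * |R|, fun x y hx hxy => ?_⟩
  refine (abs_sub_le_of_cost_le htri hB hε hε1 hR o x y hx hxy).trans ?_
  exact mul_le_mul_of_nonneg_right hm.le (norm1_nonneg x)

theorem ae_largeScaleContinuous {Ω : Type*} [MeasurableSpace Ω] {μ : Measure Ω}
    {c : Ω → V d → V d → ℝ} (htri : ∀ ω x y z, c ω x z ≤ c ω x y + c ω y z) {B : ℝ} (hB : 0 ≤ B)
    (hc : ∀ ε > 0, ∀ᵐ ω ∂μ, ∃ R, ∀ x y, R ≤ norm1 x → norm1 (x - y) ≤ ε * norm1 x →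
      c ω x y ≤ B * ε * norm1 x)
    (o : V d) : ∀ᵐ ω ∂μ, LargeScaleContinuous (c ω o) := by
  filter_upwards [ae_all_iff.2 fun m : ℕ => hc _ (Nat.one_div_pos_of_nat (n := m))] with ω hω
  exact largeScaleContinuous_of_cost_le (htri ω) hB hω o

end

theorem shape_theorem_for_modified_cost_general
    {d : ℕ}
    {Ω : Type*} [MeasurableSpace Ω] (μ : Measure Ω)
    (lam : ℝ) (hlam : 0 ≤ lam)
    (aq : Ω → V d → V d → ℝ)        -- `aq ω x y = a_λ^q(x,y,ω_p)`
    (chemq : Ω → V d → V d → ℝ)     -- `chemq ω x y = d_{ω_q}(x,y)`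
    (cl : Ω → V d → V d)            -- the closest point map `[·]_q`
    (alph : (Fin d → ℝ) → ℝ)        -- the Lyapunov exponent `α_λ^p`
    (htri : ∀ ω, ∀ x y z : V d, aq ω x z ≤ aq ω x y + aq ω y z)
    -- `a_λ^q(x,y,ω_p) ≤ (λ + log 2d) d_{ω_q}([x]_q,[y]_q)`
    (hstep : ∀ ω, ∀ x y : V d,
        aq ω x y ≤ (lam + Real.log (2 * d)) * chemq ω (cl ω x) (cl ω y))
    -- `α_λ^p` is a norm bounded by `α_λ^p(ξ₁) ‖·‖₁`
    (hhom : ∀ (c : ℝ) (x : Fin d → ℝ), alph (c • x) = |c| * alph x)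
    (halphtri : ∀ x y : Fin d → ℝ, alph (x + y) ≤ alph x + alph y)
    (halph_bd : ∀ x : Fin d → ℝ, alph x ≤ alph (xi1 d) * norm1R x)
    -- radial almost-sure convergence (Kingman limit) for each lattice direction
    (hrad : ∀ x : V d, ∀ᵐ ω ∂μ,
        Tendsto (fun k : ℕ => ((k : ℝ))⁻¹ * aq ω 0 (k • x)) atTop (nhds (alph (toR x))))
    -- the maximal chemical-distance estimate
    (CAP : ℝ) (hCAP : 1 ≤ CAP)
    (hmax : ∀ ε : ℝ, 0 < ε → ∀ᵐ ω ∂μ, ∃ R : ℝ, ∀ x y : V d,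
        R ≤ norm1 x → norm1 (x - y) ≤ ε * norm1 x →
          chemq ω (cl ω x) (cl ω y) < 3 * CAP * ε * norm1 x) :
    ∀ᵐ ω ∂μ, ∀ ε : ℝ, 0 < ε → ∃ R : ℝ, ∀ x : V d,
      R ≤ norm1 x → |aq ω 0 x - alph (toR x)| ≤ ε * norm1 x := by
  set C := lam + Real.log (2 * d)
  have hC : 0 ≤ C := add_nonneg hlam (by exact_mod_cast Real.log_natCast_nonneg (2 * d))
  let p : Seminorm ℝ (Fin d → ℝ) :=
    Seminorm.of alph halphtri fun c x => by rw [hhom, Real.norm_eq_abs]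
  have hcost : ∀ ε > 0, ∀ᵐ ω ∂μ, ∃ R, ∀ x y, R ≤ norm1 x → norm1 (x - y) ≤ ε * norm1 x →
      aq ω x y ≤ C * (3 * CAP) * ε * norm1 x := fun ε hε => by
    filter_upwards [hmax ε hε] with ω ⟨R, hR⟩
    exact ⟨R, fun x y hx hxy => (hstep ω x y).trans <|
      (mul_le_mul_of_nonneg_left (hR x y hx hxy).le hC).trans_eq (by ring)⟩
  filter_upwards [ae_largeScaleContinuous htri (mul_nonneg hC (by linarith)) hcost 0,
    ae_all_iff.2 hrad] with ω hcont hradω ε hε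
  exact exists_abs_sub_le_of_radial_limit (p := p) (apply_nonneg p _) halph_bd hradω hcont hε

/-- Almost surely, the modified travel cost approximates the
Lyapunov exponent uniformly in direction:
`lim_{‖x‖₁ → ∞} (a_λ^q(0,x,ω_p) - α_λ^p(x))/‖x‖₁ = 0`. -/
theorem shape_theorem_for_modified_cost
    {d : ℕ} (hd : 2 ≤ d)
    {Ω : Type*} [MeasurableSpace Ω] (μ : Measure Ω) [IsProbabilityMeasure μ]
    (lam : ℝ) (hlam : 0 ≤ lam)
    (aq : Ω → V d → V d → ℝ)        -- `aq ω x y = a_λ^q(x,y,ω_p)`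
    (chemq : Ω → V d → V d → ℝ)     -- `chemq ω x y = d_{ω_q}(x,y)`
    (cl : Ω → V d → V d)            -- the closest point map `[·]_q`
    (alph : (Fin d → ℝ) → ℝ)        -- the Lyapunov exponent `α_λ^p`
    (ha_nonneg : ∀ ω, ∀ x y : V d, 0 ≤ aq ω x y)
    (htri : ∀ ω, ∀ x y z : V d, aq ω x z ≤ aq ω x y + aq ω y z)
    -- `a_λ^q(x,y,ω_p) ≤ (λ + log 2d) d_{ω_q}([x]_q,[y]_q)`
    (hstep : ∀ ω, ∀ x y : V d,
        aq ω x y ≤ (lam + Real.log (2 * d)) * chemq ω (cl ω x) (cl ω y))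
    -- `α_λ^p` is a norm bounded by `α_λ^p(ξ₁) ‖·‖₁`
    (hhom : ∀ (c : ℝ) (x : Fin d → ℝ), alph (c • x) = |c| * alph x)
    (halphtri : ∀ x y : Fin d → ℝ, alph (x + y) ≤ alph x + alph y)
    (halph_nonneg : ∀ x, 0 ≤ alph x)
    (halph_bd : ∀ x : Fin d → ℝ, alph x ≤ alph (xi1 d) * norm1R x)
    -- radial almost-sure convergence (Kingman limit) for each lattice direction
    (hrad : ∀ x : V d, ∀ᵐ ω ∂μ,
        Tendsto (fun k : ℕ => ((k : ℝ))⁻¹ * aq ω 0 (k • x)) atTop (nhds (alph (toR x))))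
    -- the maximal chemical-distance estimate
    (CAP : ℝ) (hCAP : 1 ≤ CAP)
    (hmax : ∀ ε : ℝ, 0 < ε → ∀ᵐ ω ∂μ, ∃ R : ℝ, ∀ x y : V d,
        R ≤ norm1 x → norm1 (x - y) ≤ ε * norm1 x →
          chemq ω (cl ω x) (cl ω y) < 3 * CAP * ε * norm1 x) :
    ∀ᵐ ω ∂μ, ∀ ε : ℝ, 0 < ε → ∃ R : ℝ, ∀ x : V d,
      R ≤ norm1 x → |aq ω 0 x - alph (toR x)| ≤ ε * norm1 x :=
  shape_theorem_for_modified_cost_general μ lam hlam aq chemq cl alph htri hstep hhom halphtri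
    halph_bd hrad CAP hCAP hmax

end PercShape
end

section
/- Fix λ > 0, p_c < q ≤ p ≤ 1, ρ := 4 C_AP(q)(λ+log 2d)/λ, and for x ∈ Z^d define the truncated travel cost ã_λ^q(0,x,ω_p) := min( −log E_{ω_p}^{[0]_q}[e^{−λH([x]_q)} 1{H([x]_q) ≤ ρ‖x‖_1}], (λ+log 2d) d_{ω_q}([0]_q,[x]_q) ). Then on the event Γ_x(q) := { d_{ω_q}([0]_q,[x]_q) ≤ 3 C_AP(q)‖x‖_1 }, one has |ã_λ^q(0,x,ω_p) − a_λ^q(0,x,ω_p)| ≤ log 2. -/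
open Real

namespace PercTrunc

/-- Vertices of the `d`-dimensional cubic lattice. -/
abbrev V (d : ℕ) := Fin d → ℤ

/-- The ℓ¹-norm of a lattice point. -/
noncomputable def norm1 {d : ℕ} (x : V d) : ℝ := ∑ i, |(x i : ℝ)|

lemma one_le_norm1 {d : ℕ} (x : V d) (hx : x ≠ 0) : 1 ≤ norm1 x := by
  obtain ⟨i, hi⟩ : ∃ i, x i ≠ 0 := by
    by_contra h
    push_neg at h
    exact hx (funext h)
  have h1 : (1 : ℝ) ≤ |(x i : ℝ)| := by
    have : (1 : ℤ) ≤ |x i| := Int.one_le_abs (by exact_mod_cast hi)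
    calc (1 : ℝ) ≤ (|x i| : ℝ) := by exact_mod_cast this
      _ = |(x i : ℝ)| := by push_cast; ring
  calc (1 : ℝ) ≤ |(x i : ℝ)| := h1
    _ ≤ ∑ j, |(x j : ℝ)| := Finset.single_le_sum (f := fun j => |(x j : ℝ)|) (fun j _ => abs_nonneg _) (Finset.mem_univ i)

/-- On the event `Γ_x(q) = {d_{ω_q}([0]_q,[x]_q) ≤ 3C_AP‖x‖₁}`,
the truncated travel cost
`ã_λ^q(0,x,ω_p) = min(-log E^{[0]_q}[e^{-λH([x]_q)} 1_{H ≤ ρ‖x‖₁}], (λ+log 2d) d_{ω_q}([0]_q,[x]_q))`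
differs from `a_λ^q(0,x,ω_p) = -log E^{[0]_q}[e^{-λH([x]_q)} 1_{H < ∞}]` by at
most `log 2`. Here `Efull` and `Etrunc` denote the two expectations, `Dq` the
chemical distance `d_{ω_q}([0]_q,[x]_q)`, and `ρ = 4C_AP(λ + log 2d)/λ`. -/
theorem truncated_cost_close_on_good_event
    {d : ℕ} (hd : 2 ≤ d) (x : V d) (hx : x ≠ 0)
    (lam : ℝ) (hlam : 0 < lam)
    (CAP : ℝ) (hCAP : 1 ≤ CAP)
    (ρ : ℝ) (hρ : ρ = 4 * CAP * (lam + Real.log (2 * d)) / lam)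
    (Efull Etrunc Dq a atil : ℝ)
    -- the truncated expectation is part of the full one, and the tail
    -- `E[e^{-λH} 1_{ρ‖x‖₁ < H < ∞}]` is at most `e^{-λρ‖x‖₁}`
    (hEtrunc_nonneg : 0 ≤ Etrunc) (hEfull_pos : 0 < Efull)
    (hEle : Etrunc ≤ Efull)
    (hsplit : Efull ≤ Etrunc + Real.exp (-(lam * ρ * norm1 x)))
    -- the travel cost and its truncation
    (ha : a = -Real.log Efull)
    (hatil : atil = min (-Real.log Etrunc) ((lam + Real.log (2 * d)) * Dq))
    -- `a_λ^q(0,x,ω_p) ≤ (λ + log 2d) d_{ω_q}([0]_q,[x]_q)`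
    (hbound : a ≤ (lam + Real.log (2 * d)) * Dq)
    -- the good event `Γ_x(q)`
    (hGamma : Dq ≤ 3 * CAP * norm1 x) :
    |atil - a| ≤ Real.log 2 := by
  set N := norm1 x with hN
  set L := lam + Real.log (2 * d) with hLdef
  have hN1 : 1 ≤ N := one_le_norm1 x hx
  have hlog2 : (0 : ℝ) < Real.log 2 := Real.log_pos (by norm_num)
  have hlog2d : Real.log 2 ≤ Real.log (2 * d) := by
    apply Real.log_le_log (by norm_num)
    have : (2 : ℝ) ≤ (d : ℝ) := by exact_mod_cast hd
    nlinarith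
  have hL : Real.log 2 ≤ L := by
    have := hlam.le
    simp only [hLdef]; linarith
  have hLpos : 0 < L := lt_of_lt_of_le hlog2 hL
  -- λρN = 4 CAP L N
  have hlr : lam * ρ = 4 * CAP * L := by
    rw [hρ]; field_simp
  -- a ≤ 3 CAP L N
  have haub : a ≤ 3 * CAP * L * N := by
    calc a ≤ L * Dq := hbound
      _ ≤ L * (3 * CAP * N) := by
          exact mul_le_mul_of_nonneg_left hGamma hLpos.le
      _ = 3 * CAP * L * N := by ring
  -- λρN - a ≥ log 2
  have hgap : a + Real.log 2 ≤ lam * ρ * N := by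
    have h1 : lam * ρ * N = 4 * CAP * L * N := by rw [hlr]
    have h2 : Real.log 2 ≤ CAP * L * N := by
      have e1 : L ≤ CAP * L := le_mul_of_one_le_left hLpos.le hCAP
      have e2 : CAP * L ≤ CAP * L * N :=
        le_mul_of_one_le_right (by nlinarith) hN1
      linarith
    nlinarith
  -- the tail is at most Efull/2
  have hEfull : Efull = Real.exp (-a) := by
    rw [ha, neg_neg, Real.exp_log hEfull_pos]
  have htail : Real.exp (-(lam * ρ * N)) ≤ Efull / 2 := by
    have : Real.exp (-(lam * ρ * N)) ≤ Real.exp (-(a + Real.log 2)) :=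
      Real.exp_le_exp.mpr (by linarith)
    calc Real.exp (-(lam * ρ * N)) ≤ Real.exp (-(a + Real.log 2)) := this
      _ = Real.exp (-a) / 2 := by
          rw [neg_add, Real.exp_add, Real.exp_neg (Real.log 2), Real.exp_log (by norm_num : (0:ℝ) < 2)]
          ring
      _ = Efull / 2 := by rw [hEfull]
  -- hence Etrunc ≥ Efull/2 > 0
  have hEt : Efull / 2 ≤ Etrunc := by linarith
  have hEtpos : 0 < Etrunc := lt_of_lt_of_le (by linarith) hEt
  -- upper bound: -log Etrunc ≤ a + log 2
  have hub : -Real.log Etrunc ≤ a + Real.log 2 := by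
    have h1 : Real.log (Efull / 2) ≤ Real.log Etrunc :=
      Real.log_le_log (by linarith) hEt
    have h2 : Real.log (Efull / 2) = Real.log Efull - Real.log 2 := by
      rw [Real.log_div hEfull_pos.ne' (by norm_num)]
    rw [ha]; linarith
  -- lower bound: a ≤ -log Etrunc
  have hlb : a ≤ -Real.log Etrunc := by
    have := Real.log_le_log hEtpos hEle
    rw [ha]; linarith
  rw [abs_le]
  constructor
  · rw [hatil]
    rcases le_total (-Real.log Etrunc) (L * Dq) with h | h
    · rw [min_eq_left h]; linarith
    · rw [min_eq_right h]; linarith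
  · rw [hatil]
    calc min (-Real.log Etrunc) (L * Dq) - a ≤ -Real.log Etrunc - a :=
          by have := min_le_left (-Real.log Etrunc) (L * Dq); linarith
      _ ≤ Real.log 2 := by linarith

end PercTrunc
end

section
/- The effective domain of the quenched large-deviation rate function I^p(x) := sup_{λ≥0}(α_λ^p(x) − λ) is exactly the unit ball of the time constant: D_{I^p} = { x ∈ R^d : μ^p(x) ≤ 1 }. Moreover, I^p(x) ≤ log(2d) for all x ∈ D_{I^p}. -/
open Filter

namespace PercRateDomain

/-- The effective domain of the quenched large-deviation rate
function `I^p(x) = sup_{λ ≥ 0}(α_λ^p(x) - λ)` is exactly the unit ball of the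
time constant: `D_{I^p} = {x ∈ ℝ^d : μ^p(x) ≤ 1}`; moreover `I^p ≤ log 2d` on
`D_{I^p}`. The rate function is formalized with values in `EReal`. -/
theorem rate_function_effective_domain
    {d : ℕ} (hd : 2 ≤ d)
    (alph : ℝ → (Fin d → ℝ) → ℝ)      -- `alph l x = α_l^p(x)`
    (mu : (Fin d → ℝ) → ℝ)            -- the time constant `μ^p`
    (hmunonneg : ∀ x, 0 ≤ mu x)
    -- `α_λ^p(x) ≤ (λ + log 2d) μ^p(x)` for all `λ ≥ 0`
    (hup : ∀ l : ℝ, 0 ≤ l → ∀ x : Fin d → ℝ,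
        alph l x ≤ (l + Real.log (2 * d)) * mu x)
    -- `μ^p(x) ≤ α_λ^p(x)/λ` for all `λ > 0`
    (hlow : ∀ l : ℝ, 0 < l → ∀ x : Fin d → ℝ, mu x ≤ alph l x / l) :
    {x : Fin d → ℝ |
        (⨆ l : {l : ℝ // 0 ≤ l}, ((alph (l : ℝ) x - (l : ℝ) : ℝ) : EReal)) ≠ ⊤}
      = {x : Fin d → ℝ | mu x ≤ 1} ∧
    ∀ x : Fin d → ℝ, mu x ≤ 1 →
      (⨆ l : {l : ℝ // 0 ≤ l}, ((alph (l : ℝ) x - (l : ℝ) : ℝ) : EReal))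
        ≤ ((Real.log (2 * d) : ℝ) : EReal) := by
  have hlog : (0 : ℝ) ≤ Real.log (2 * d) := by
    apply Real.log_nonneg
    have : (2 : ℝ) ≤ (d : ℝ) := by exact_mod_cast hd
    nlinarith
  -- the bound
  have hbound : ∀ x : Fin d → ℝ, mu x ≤ 1 →
      (⨆ l : {l : ℝ // 0 ≤ l}, ((alph (l : ℝ) x - (l : ℝ) : ℝ) : EReal))
        ≤ ((Real.log (2 * d) : ℝ) : EReal) := by
    intro x hx
    apply iSup_le
    rintro ⟨l, hl⟩
    rw [EReal.coe_le_coe_iff]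
    have h1 := hup l hl x
    have h2 := hmunonneg x
    nlinarith
  refine ⟨?_, hbound⟩
  ext x
  simp only [Set.mem_setOf_eq]
  constructor
  · intro h
    by_contra hmu
    push_neg at hmu
    apply h
    rw [EReal.eq_top_iff_forall_lt]
    intro y
    set l : ℝ := max 1 (y / (mu x - 1) + 1) with hldef
    have hl1 : (1 : ℝ) ≤ l := le_max_left _ _
    have hl0 : (0 : ℝ) ≤ l := by linarith
    have hlpos : (0 : ℝ) < l := by linarith
    have hlow' := hlow l hlpos x
    have halph : l * mu x ≤ alph l x := by
      rw [le_div_iff₀ hlpos] at hlow'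
      linarith [hlow']
    have hly : y / (mu x - 1) + 1 ≤ l := le_max_right _ _
    have hmu1 : (0 : ℝ) < mu x - 1 := by linarith
    have hy : y < alph l x - l := by
      have : y / (mu x - 1) * (mu x - 1) = y := by field_simp
      nlinarith [mul_le_mul_of_nonneg_right hly (le_of_lt hmu1)]
    calc ((y : ℝ) : EReal) < ((alph l x - l : ℝ) : EReal) := by
            exact_mod_cast hy
      _ ≤ _ := le_iSup (fun l : {l : ℝ // 0 ≤ l} =>
            ((alph (l : ℝ) x - (l : ℝ) : ℝ) : EReal)) ⟨l, hl0⟩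
  · intro hx
    exact ne_top_of_le_ne_top (by simp) (hbound x hx)

end PercRateDomain
end

section
/- Semicontinuity of the maximizing parameters: suppose f_n, f : [0,∞) → R are concave functions with f_n(λ) → f(λ) pointwise for all λ > 0, and let λ_±^{(n)}, λ_± be defined from f_n, f as λ_+ = sup{λ>0 : ∂_-f(λ) ≥ 1}, λ_- = inf{λ>0 : ∂_-f(λ) ≤ 1}. If λ_+ < ∞, then liminf_n λ_-^{(n)} ≥ λ_- and limsup_n λ_+^{(n)} ≤ λ_+. -/
open Set Filter

namespace RateSemicont

/-- Semicontinuity of the maximizing parameters: if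
`f_n, f : [0,∞) → ℝ` are concave with `f_n(λ) → f(λ)` for every `λ > 0`, with
left-derivatives `D_n, D` (characterized by the concave slope inequalities),
and `λ₊ = sup{λ > 0 : D λ ≥ 1} < ∞`, then
`liminf_n λ₋⁽ⁿ⁾ ≥ λ₋` and `limsup_n λ₊⁽ⁿ⁾ ≤ λ₊`, where
`λ₊⁽ⁿ⁾ = sup{λ > 0 : D_n λ ≥ 1}` and `λ₋⁽ⁿ⁾ = inf{λ > 0 : D_n λ ≤ 1}`. -/
theorem lambda_plus_minus_semicontinuity
    (f : ℕ → ℝ → ℝ) (g : ℝ → ℝ) (Dn : ℕ → ℝ → ℝ) (D : ℝ → ℝ)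
    (hconc : ∀ n, ConcaveOn ℝ (Ici 0) (f n))
    (hgconc : ConcaveOn ℝ (Ici 0) g)
    (hptw : ∀ l : ℝ, 0 < l → Tendsto (fun n => f n l) atTop (nhds (g l)))
    -- slope characterization of the left derivatives
    (hDnleft : ∀ n, ∀ l₀ : ℝ, 0 < l₀ → ∀ l : ℝ, 0 ≤ l → l < l₀ →
        Dn n l₀ ≤ (f n l₀ - f n l) / (l₀ - l))
    (hDnright : ∀ n, ∀ l₀ : ℝ, 0 < l₀ → ∀ l : ℝ, l₀ < l →
        (f n l - f n l₀) / (l - l₀) ≤ Dn n l₀)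
    (hDleft : ∀ l₀ : ℝ, 0 < l₀ → ∀ l : ℝ, 0 ≤ l → l < l₀ →
        D l₀ ≤ (g l₀ - g l) / (l₀ - l))
    (hDright : ∀ l₀ : ℝ, 0 < l₀ → ∀ l : ℝ, l₀ < l →
        (g l - g l₀) / (l - l₀) ≤ D l₀)
    (hDnmono : ∀ n, AntitoneOn (Dn n) (Ioi 0))
    (hDmono : AntitoneOn D (Ioi 0))
    -- `λ₊ < ∞`
    (hbdd : BddAbove {l : ℝ | 0 < l ∧ 1 ≤ D l}) :
    ((sInf {l : ℝ | 0 < l ∧ D l ≤ 1} : ℝ) : EReal)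
        ≤ liminf (fun n => ((sInf {l : ℝ | 0 < l ∧ Dn n l ≤ 1} : ℝ) : EReal)) atTop ∧
    limsup (fun n => ((sSup {l : ℝ | 0 < l ∧ 1 ≤ Dn n l} : ℝ) : EReal)) atTop
        ≤ ((sSup {l : ℝ | 0 < l ∧ 1 ≤ D l} : ℝ) : EReal) := by

  set lm : ℝ := sInf {l : ℝ | 0 < l ∧ D l ≤ 1} with hlm
  set lp : ℝ := sSup {l : ℝ | 0 < l ∧ 1 ≤ D l} with hlp
  have hlp0 : 0 ≤ lp := Real.sSup_nonneg (fun x hx => hx.1.le)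
  have hlm0 : 0 ≤ lm := Real.sInf_nonneg (fun x hx => hx.1.le)
  have hDlt : ∀ L : ℝ, lp < L → D L < 1 := by
    intro L hL
    by_contra h
    push_neg at h
    have : L ≤ lp := le_csSup hbdd ⟨lt_of_le_of_lt hlp0 hL, h⟩
    linarith
  have hDgt : ∀ l : ℝ, 0 < l → l < lm → 1 < D l := by
    intro l hl0 hl
    by_contra h
    push_neg at h
    have : lm ≤ l := csInf_le ⟨0, fun x hx => hx.1.le⟩ ⟨hl0, h⟩
    linarith
  have hslope : ∀ a b : ℝ, 0 < a → 0 < b →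
      Tendsto (fun n => (f n b - f n a) / (b - a)) atTop (nhds ((g b - g a) / (b - a))) :=
    fun a b ha hb => ((hptw b hb).sub (hptw a ha)).div_const _
  have hA : ∀ L' : ℝ, lp < L' → ∀ᶠ n in atTop, Dn n L' < 1 := by
    intro L' hL'
    set L : ℝ := (lp + L') / 2 with hLdef
    have hL1 : lp < L := by rw [hLdef]; linarith
    have hL2 : L < L' := by rw [hLdef]; linarith
    have hL0 : 0 < L := lt_of_le_of_lt hlp0 hL1
    have hL'0 : 0 < L' := hL0.trans hL2
    have hs : (g L' - g L) / (L' - L) < 1 :=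
      lt_of_le_of_lt (hDright L hL0 L' hL2) (hDlt L hL1)
    filter_upwards [(hslope L L' hL0 hL'0).eventually_lt_const hs] with n hn
    exact lt_of_le_of_lt (hDnleft n L' hL'0 L hL0.le hL2) hn
  have hB : ∀ l₀ : ℝ, 0 < l₀ → l₀ < lm → ∀ᶠ n in atTop, 1 < Dn n l₀ := by
    intro l₀ h0 hlt
    set l : ℝ := (l₀ + lm) / 2 with hldef
    have h1 : l₀ < l := by rw [hldef]; linarith
    have h2 : l < lm := by rw [hldef]; linarith
    have hl0 : 0 < l := h0.trans h1
    have hs : 1 < (g l - g l₀) / (l - l₀) :=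
      lt_of_lt_of_le (hDgt l hl0 h2) (hDleft l hl0 l₀ h0.le h1)
    filter_upwards [(hslope l₀ l h0 hl0).eventually_const_lt hs] with n hn
    exact lt_of_lt_of_le hn (hDnright n l₀ h0 l h1)
  constructor
  · -- liminf part
    have h0 : (0 : EReal) ≤ liminf
        (fun n => ((sInf {l : ℝ | 0 < l ∧ Dn n l ≤ 1} : ℝ) : EReal)) atTop := by
      refine le_liminf_of_le (by isBoundedDefault) ?_
      refine Eventually.of_forall fun n => ?_
      have h : (0:ℝ) ≤ sInf {l : ℝ | 0 < l ∧ Dn n l ≤ 1} :=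
        Real.sInf_nonneg (fun x hx => hx.1.le)
      exact_mod_cast h
    have hx : ∀ x : ℝ, 0 < x → x < lm →
        (x : EReal) ≤ liminf
          (fun n => ((sInf {l : ℝ | 0 < l ∧ Dn n l ≤ 1} : ℝ) : EReal)) atTop := by
      intro x hx0 hxlm
      refine le_liminf_of_le (by isBoundedDefault) ?_
      filter_upwards [hB x hx0 hxlm, hA (lp + 1) (by linarith)] with n hBn hAn
      have hmem : lp + 1 ∈ {l : ℝ | 0 < l ∧ Dn n l ≤ 1} :=
        ⟨by linarith, hAn.le⟩
      have hle : x ≤ sInf {l : ℝ | 0 < l ∧ Dn n l ≤ 1} := by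
        apply le_csInf ⟨_, hmem⟩
        intro y hy
        by_contra hxy
        push_neg at hxy
        have := hDnmono n (mem_Ioi.2 hy.1) (mem_Ioi.2 hx0) hxy.le
        have := hy.2
        linarith
      exact_mod_cast hle
    rcases eq_or_lt_of_le hlm0 with h | h
    · rw [← h]; exact_mod_cast h0
    · apply le_of_forall_lt_imp_le_of_dense
      intro c hc
      induction c using EReal.rec with
      | bot => exact bot_le
      | coe z =>
        have hz : z < lm := by exact_mod_cast hc
        set z' : ℝ := (max z 0 + lm) / 2 with hz'
        have hm : max z 0 < lm := max_lt hz h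
        have hz'1 : max z 0 < z' := by rw [hz']; linarith
        have hz'0 : 0 < z' := lt_of_le_of_lt (le_max_right z 0) hz'1
        have hz'2 : z' < lm := by rw [hz']; linarith
        have : (z : EReal) ≤ (z' : EReal) := by
          exact_mod_cast le_trans (le_max_left z 0) hz'1.le
        exact this.trans (hx z' hz'0 hz'2)
      | top => exact absurd hc (by simp)
  · -- limsup part
    apply le_of_forall_gt_imp_ge_of_dense
    intro c hc
    induction c using EReal.rec with
    | bot => exact absurd hc (by simp)
    | coe z =>
      have hz : lp < z := by exact_mod_cast hc
      refine limsup_le_of_le (by isBoundedDefault) ?_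
      filter_upwards [hA z hz] with n hn
      have hle : sSup {l : ℝ | 0 < l ∧ 1 ≤ Dn n l} ≤ z := by
        apply Real.sSup_le _ (le_trans hlp0 hz.le)
        intro y hy
        by_contra hzy
        push_neg at hzy
        have hz0 : 0 < z := lt_of_le_of_lt hlp0 hz
        have := hDnmono n (mem_Ioi.2 hz0) (mem_Ioi.2 hy.1) hzy.le
        have := hy.2
        linarith
      exact_mod_cast hle
    | top => exact le_top

end RateSemicont
end

section
/- If x is in the interior of the effective domain D_{I^p}, then λ_+^p(x) := sup{λ > 0 : ∂_-α_λ^p(x) ≥ 1} is finite. -/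
open Set Filter

namespace RateInterior

/-- If `x` is in the interior of the effective domain
`D_{I^p}` (equivalently `μ^p(x) < 1`), then
`λ₊^p(x) = sup{λ > 0 : ∂₋α_λ^p(x) ≥ 1}` is finite, i.e. the set
`{λ > 0 : ∂₋α_λ^p(x) ≥ 1}` is bounded above.

Here `f l = α_l^p(x)`, `D` is its left derivative in `λ` (characterized by the
concave slope inequality), and `mux = μ^p(x)` with `α_λ^p(x)/λ ↓ μ^p(x)`. -/
theorem lambda_plus_finite_on_interior
    (f D : ℝ → ℝ) (mux : ℝ)
    (hconc : ConcaveOn ℝ (Ici 0) f)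
    (h0 : 0 ≤ f 0)
    -- slopes from the left are at least the left derivative
    (hDleft : ∀ l₀ : ℝ, 0 < l₀ → ∀ l : ℝ, 0 ≤ l → l < l₀ →
        D l₀ ≤ (f l₀ - f l) / (l₀ - l))
    -- the left derivative of a concave function is nonincreasing
    (hDmono : AntitoneOn D (Ioi 0))
    -- `α_λ^p(x)/λ ↓ μ^p(x)` as `λ → ∞`
    (hconv : Tendsto (fun l : ℝ => f l / l) atTop (nhds mux))
    -- `x ∈ (D_{I^p})°`, i.e. `μ^p(x) < 1`
    (hmu : mux < 1) :
    BddAbove {l : ℝ | 0 < l ∧ 1 ≤ D l} := by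
  -- eventually f l / l < 1
  have hev : ∀ᶠ l : ℝ in atTop, f l / l < 1 :=
    hconv.eventually_lt_const hmu
  obtain ⟨l₀, hl₀⟩ := (hev.and (eventually_gt_atTop 0)).exists
  obtain ⟨hfl₀, hl₀pos⟩ := hl₀
  -- D l₀ < 1
  have hD₀ : D l₀ < 1 := by
    have h1 : D l₀ ≤ (f l₀ - f 0) / (l₀ - 0) := hDleft l₀ hl₀pos 0 le_rfl hl₀pos
    have h2 : (f l₀ - f 0) / (l₀ - 0) ≤ f l₀ / l₀ := by
      rw [sub_zero]
      gcongr
      linarith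
    calc D l₀ ≤ f l₀ / l₀ := h1.trans h2
      _ < 1 := hfl₀
  refine ⟨l₀, fun l hl => ?_⟩
  obtain ⟨hlpos, hDl⟩ := hl
  by_contra hgt
  push_neg at hgt
  have := hDmono (mem_Ioi.mpr hl₀pos) (mem_Ioi.mpr hlpos) hgt.le
  linarith

end RateInterior
end
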